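/- Let K ⊆ R^n be a convex body containing a Euclidean ball of radius r, and let f(θ) = ln ∫_K e^{⟨θ,x⟩}dx with Hessian Σ(θ) and local norm ‖v‖_θ = √(v^⊤Σ(θ)v). Then for all θ ∈ R^n, ‖θ‖_θ ≥ r‖θ‖ / (2(n+1) + r‖θ‖), where ‖θ‖ is the Euclidean norm. -/
import Mathlib


open MeasureTheory
open scoped RealInnerProductSpace

/-- The Boltzmann distribution on `K` with parameter `θ`. -/
noncomputable def boltzmann {n : ℕ} (K : Set (EuclideanSpace ℝ (Fin n)))
    (θ : EuclideanSpace ℝ (Fin n)) : Measure (EuclideanSpace ℝ (Fin n)) :=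
  let ν := (volume.restrict K).withDensity fun x => ENNReal.ofReal (Real.exp ⟪θ, x⟫)
  (ν Set.univ)⁻¹ • ν

/-- The mean of a measure on Euclidean space. -/
noncomputable def meanVec {n : ℕ} (μ : Measure (EuclideanSpace ℝ (Fin n))) :
    EuclideanSpace ℝ (Fin n) := ∫ x, x ∂μ

/-- The covariance bilinear form of a measure; for the Boltzmann distribution with
parameter `θ` this is the Hessian `Σ(θ)` of the log partition function. -/
noncomputable def covForm {n : ℕ} (μ : Measure (EuclideanSpace ℝ (Fin n)))
    (v w : EuclideanSpace ℝ (Fin n)) : ℝ :=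
  ∫ x, ⟪x - meanVec μ, v⟫ * ⟪x - meanVec μ, w⟫ ∂μ

/-- Local norm `‖v‖_θ = √(vᵀ Σ(θ) v)` for the log partition function of `K`. -/
noncomputable def lnorm {n : ℕ} (K : Set (EuclideanSpace ℝ (Fin n)))
    (θ v : EuclideanSpace ℝ (Fin n)) : ℝ :=
  Real.sqrt (covForm (boltzmann K θ) v v)

theorem stmt13 (n : ℕ) (r : ℝ) (hr : 0 < r)
    (K : Set (EuclideanSpace ℝ (Fin n)))
    (hKconv : Convex ℝ K) (hKcomp : IsCompact K) (hKint : (interior K).Nonempty)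
    (c : EuclideanSpace ℝ (Fin n)) (hball : Metric.closedBall c r ⊆ K)
    -- available fact: `λ_min(Σ(0)) ≥ (1/4)(r/(n+1))²`
    (hlam0 : ∀ v : EuclideanSpace ℝ (Fin n),
      (1 / 4) * (r / (n + 1)) ^ 2 * ‖v‖ ^ 2 ≤ covForm (boltzmann K 0) v v)
    -- available fact: the self-concordance inequality `‖θ‖₀ ≤ ‖θ‖_θ/(1 − ‖θ‖_θ)`
    (hsc : ∀ θ : EuclideanSpace ℝ (Fin n), lnorm K θ θ < 1 →
      lnorm K 0 θ ≤ lnorm K θ θ / (1 - lnorm K θ θ)) :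
    ∀ θ : EuclideanSpace ℝ (Fin n),
      r * ‖θ‖ / (2 * (n + 1) + r * ‖θ‖) ≤ lnorm K θ θ := by
  intro θ
  set t := lnorm K θ θ with ht
  have ht0 : 0 ≤ t := Real.sqrt_nonneg _
  have hn1 : (0:ℝ) < (n:ℝ) + 1 := by positivity
  have hA : 0 ≤ r * ‖θ‖ := by positivity
  have hden : (0:ℝ) < 2 * ((n:ℝ) + 1) + r * ‖θ‖ := by positivity
  by_cases hcase : t < 1
  · have hL0 : r * ‖θ‖ / (2 * ((n:ℝ) + 1)) ≤ lnorm K 0 θ := by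
      rw [lnorm]
      have h := hlam0 θ
      have : (r * ‖θ‖ / (2 * ((n:ℝ) + 1))) ^ 2 ≤ covForm (boltzmann K 0) θ θ := by
        refine le_trans (le_of_eq ?_) h
        field_simp
        ring
      calc r * ‖θ‖ / (2 * ((n:ℝ) + 1))
          = Real.sqrt ((r * ‖θ‖ / (2 * ((n:ℝ) + 1))) ^ 2) := by
            rw [Real.sqrt_sq (by positivity)]
        _ ≤ _ := Real.sqrt_le_sqrt this
    have hsc' := hsc θ hcase
    have hb : r * ‖θ‖ / (2 * ((n:ℝ) + 1)) ≤ t / (1 - t) := le_trans hL0 hsc'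
    have h1t : (0:ℝ) < 1 - t := by linarith
    rw [div_le_div_iff₀ (by positivity) h1t] at hb
    rw [div_le_iff₀ hden]
    nlinarith [hb, hA, ht0]
  · push_neg at hcase
    have : r * ‖θ‖ / (2 * ((n:ℝ) + 1) + r * ‖θ‖) ≤ 1 := by
      rw [div_le_one hden]; linarith
    linarith
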